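/- arXiv:1509.05902 — 2 statements merged into one kernel-verified Lean document; each statement's English description precedes it below -/
import Mathlib

section
/- Let x, y be probability vectors in ℝ_+^n. If e_k(x) ≤ e_k(y) for all k = 1,…,n and 1 < α < 2, then Σ_{i=1}^n x_i^α ≥ Σ_{i=1}^n y_i^α. -/
/-!
Write `α = 1 + s` with `0 < s < 1`. Since `u - log (1 + u)` behaves like `u² / 2` at `0` and like
`u` at `∞`, the integral `C_s = ∫₀^∞ (u - log (1 + u)) u^(-2-s) du` converges and is positive, and
scaling gives `t^α = C_s⁻¹ ∫₀^∞ (u t - log (1 + u t)) u^(-2-s) du` for `t ≥ 0`.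
Summing over the coordinates of a probability vector `x`, the integrand becomes
`(u - log ∏ᵢ (1 + u xᵢ)) u^(-2-s)`, and `∏ᵢ (1 + u xᵢ) = ∑ₖ eₖ(x) uᵏ` is monotone in the `eₖ`
for `u ≥ 0`, so the integrand for `y` lies pointwise below the one for `x`.
-/

open Finset Real MeasureTheory Set

noncomputable def esymm (n k : ℕ) (x : Fin n → ℝ) : ℝ :=
  ∑ s ∈ Finset.powersetCard k (Finset.univ : Finset (Fin n)), ∏ i ∈ s, x i

section ElementarySymmetric

variable {n : ℕ}

lemma esymm_zero (x : Fin n → ℝ) : esymm n 0 x = 1 := by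
  simp [esymm]

lemma prod_one_add_mul_eq_sum_esymm (x : Fin n → ℝ) (u : ℝ) :
    ∏ i, (1 + u * x i) = ∑ k ∈ range (n + 1), esymm n k x * u ^ k := by
  simp only [prod_one_add, powerset_card_disjiUnion, sum_disjiUnion, card_univ, Fintype.card_fin]
  refine sum_congr rfl fun k _ => ?_
  rw [esymm, sum_mul]
  refine sum_congr rfl fun t ht => ?_
  rw [prod_mul_distrib, prod_const, (mem_powersetCard.mp ht).2, mul_comm]

lemma prod_one_add_mul_le_of_esymm_le {x y : Fin n → ℝ}
    (hE : ∀ k, 1 ≤ k → k ≤ n → esymm n k x ≤ esymm n k y) {u : ℝ} (hu : 0 ≤ u) :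
    ∏ i, (1 + u * x i) ≤ ∏ i, (1 + u * y i) := by
  rw [prod_one_add_mul_eq_sum_esymm, prod_one_add_mul_eq_sum_esymm]
  refine sum_le_sum fun k hk => ?_
  rcases Nat.eq_zero_or_pos k with rfl | hk0
  · simp [esymm_zero]
  · exact mul_le_mul_of_nonneg_right (hE k hk0 (Nat.lt_succ_iff.mp (mem_range.mp hk)))
      (pow_nonneg hu k)

end ElementarySymmetric

noncomputable def logGap (u : ℝ) : ℝ := u - log (1 + u)

section LogGap

variable {u : ℝ}

lemma logGap_zero : logGap 0 = 0 := by
  simp [logGap]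

lemma logGap_pos (hu : 0 < u) : 0 < logGap u := by
  have := log_lt_sub_one_of_pos (by linarith : 0 < 1 + u) (by linarith : 1 + u ≠ 1)
  rw [logGap]; linarith

lemma logGap_nonneg (hu : 0 ≤ u) : 0 ≤ logGap u := by
  rcases hu.eq_or_lt with rfl | hu
  · rw [logGap_zero]
  · exact (logGap_pos hu).le

lemma logGap_le_self (hu : 0 ≤ u) : logGap u ≤ u := by
  have := log_nonneg (by linarith : 1 ≤ 1 + u)
  rw [logGap]; linarith

lemma logGap_le_sq (hu : 0 ≤ u) : logGap u ≤ u ^ 2 := by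
  have hlog := le_log_one_add_of_nonneg hu
  have : u - u ^ 2 ≤ 2 * u / (u + 2) := by
    rw [le_div_iff₀ (by linarith)]
    nlinarith
  rw [logGap]; linarith

lemma continuousOn_logGap : ContinuousOn logGap (Ici 0) :=
  continuousOn_id.sub <| ContinuousOn.log (f := fun v => 1 + v) (by fun_prop)
    fun v (hv : 0 ≤ v) => by positivity

lemma sum_logGap {ι : Type*} (s : Finset ι) {a : ι → ℝ} (ha : ∀ i ∈ s, 1 + a i ≠ 0) :
    ∑ i ∈ s, logGap (a i) = ∑ i ∈ s, a i - log (∏ i ∈ s, (1 + a i)) := by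
  rw [log_prod ha, ← sum_sub_distrib]
  rfl

end LogGap

noncomputable def logGapIntegral (s : ℝ) : ℝ := ∫ u in Ioi 0, logGap u * u ^ (-2 - s)

section LogGapIntegral

variable {s : ℝ}

lemma integrableOn_logGap_mul_rpow (hs0 : 0 < s) (hs1 : s < 1) :
    IntegrableOn (fun u => logGap u * u ^ (-2 - s)) (Ioi 0) := by
  have hcont : ContinuousOn (fun u => logGap u * u ^ (-2 - s)) (Ioi 0) :=
    (continuousOn_logGap.mono Ioi_subset_Ici_self).mul
      fun u hu => (continuousAt_rpow_const u _ (Or.inl (ne_of_gt hu))).continuousWithinAt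
  have hmeas {t : Set ℝ} (ht : t ⊆ Ioi 0) (hmt : MeasurableSet t) :
      AEStronglyMeasurable (fun u => logGap u * u ^ (-2 - s)) (volume.restrict t) :=
    (hcont.mono ht).aestronglyMeasurable hmt
  have hnorm {u : ℝ} (hu : 0 < u) :
      ‖logGap u * u ^ (-2 - s)‖ = logGap u * u ^ (-2 - s) :=
    Real.norm_of_nonneg (mul_nonneg (logGap_nonneg hu.le) (rpow_nonneg hu.le _))
  have hnear : IntegrableOn (fun u => logGap u * u ^ (-2 - s)) (Ioc 0 1) := by
    have hdom : IntegrableOn (fun u : ℝ => u ^ (-s)) (Ioc 0 1) :=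
      (intervalIntegrable_iff_integrableOn_Ioc_of_le zero_le_one).mp
        (intervalIntegral.intervalIntegrable_rpow' (by linarith))
    refine hdom.mono' (hmeas Ioc_subset_Ioi_self measurableSet_Ioc) ?_
    filter_upwards [ae_restrict_mem measurableSet_Ioc] with u ⟨hu0, _⟩
    calc ‖logGap u * u ^ (-2 - s)‖ ≤ u ^ (2 : ℝ) * u ^ (-2 - s) := by
          rw [hnorm hu0, rpow_two]
          exact mul_le_mul_of_nonneg_right (logGap_le_sq hu0.le) (rpow_nonneg hu0.le _)
      _ = u ^ (-s) := by rw [← rpow_add hu0]; ring_nf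
  have hfar : IntegrableOn (fun u => logGap u * u ^ (-2 - s)) (Ioi 1) := by
    have hdom : IntegrableOn (fun u : ℝ => u ^ (-1 - s)) (Ioi 1) :=
      integrableOn_Ioi_rpow_of_lt (by linarith) one_pos
    refine hdom.mono' (hmeas (Ioi_subset_Ioi zero_le_one) measurableSet_Ioi) ?_
    filter_upwards [ae_restrict_mem measurableSet_Ioi] with u hu
    have hu0 : 0 < u := one_pos.trans hu
    calc ‖logGap u * u ^ (-2 - s)‖ ≤ u ^ (1 : ℝ) * u ^ (-2 - s) := by
          rw [hnorm hu0, rpow_one]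
          exact mul_le_mul_of_nonneg_right (logGap_le_self hu0.le) (rpow_nonneg hu0.le _)
      _ = u ^ (-1 - s) := by rw [← rpow_add hu0]; ring_nf
  simpa only [Ioc_union_Ioi_eq_Ioi zero_le_one] using hnear.union hfar

lemma logGapIntegral_pos (hs0 : 0 < s) (hs1 : s < 1) : 0 < logGapIntegral s := by
  have hnonneg : 0 ≤ᵐ[volume.restrict (Ioi 0)] fun u => logGap u * u ^ (-2 - s) := by
    filter_upwards [ae_restrict_mem measurableSet_Ioi] with u hu
    exact mul_nonneg (logGap_nonneg (le_of_lt hu)) (rpow_nonneg (le_of_lt hu) _)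
  rw [logGapIntegral, setIntegral_pos_iff_support_of_nonneg_ae hnonneg
    (integrableOn_logGap_mul_rpow hs0 hs1)]
  have hsupp : Ioi (0 : ℝ) ⊆ Function.support (fun u => logGap u * u ^ (-2 - s)) ∩ Ioi 0 :=
    fun u (hu : 0 < u) => ⟨(mul_pos (logGap_pos hu) (rpow_pos_of_pos hu _)).ne', hu⟩
  exact (by simp : 0 < volume (Ioi (0 : ℝ))).trans_le (measure_mono hsupp)

lemma logGap_mul_mul_rpow {x u : ℝ} (hx : 0 < x) (hu : 0 < u) :
    logGap (u * x) * u ^ (-2 - s) = x ^ (2 + s) * (logGap (x * u) * (x * u) ^ (-2 - s)) := by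
  rw [mul_rpow hx.le hu.le, mul_comm u x, mul_left_comm, ← mul_assoc (x ^ (2 + s)),
    ← rpow_add hx, show 2 + s + (-2 - s) = 0 by ring, rpow_zero, one_mul]

lemma integrableOn_logGap_mul_mul_rpow (hs0 : 0 < s) (hs1 : s < 1) {x : ℝ} (hx : 0 ≤ x) :
    IntegrableOn (fun u => logGap (u * x) * u ^ (-2 - s)) (Ioi 0) := by
  rcases hx.eq_or_lt with rfl | hx
  · simp only [mul_zero, logGap_zero, zero_mul]
    exact integrableOn_zero
  have hcomp := (integrableOn_Ioi_comp_mul_left_iff (fun v => logGap v * v ^ (-2 - s)) 0 hx).mpr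
    (by simpa only [mul_zero] using integrableOn_logGap_mul_rpow hs0 hs1)
  exact (integrableOn_congr_fun (fun u hu => logGap_mul_mul_rpow hx hu) measurableSet_Ioi).mpr
    (hcomp.const_mul _)

lemma integral_logGap_mul_mul_rpow {x : ℝ} (hx : 0 ≤ x) (hs : -1 < s) :
    ∫ u in Ioi 0, logGap (u * x) * u ^ (-2 - s) = x ^ (1 + s) * logGapIntegral s := by
  rcases hx.eq_or_lt with rfl | hx
  · simp [logGap_zero, zero_rpow (by linarith : 1 + s ≠ 0)]
  rw [setIntegral_congr_fun measurableSet_Ioi fun u hu => logGap_mul_mul_rpow hx hu,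
    integral_const_mul, integral_comp_mul_left_Ioi (fun v => logGap v * v ^ (-2 - s)) 0 hx,
    mul_zero, smul_eq_mul, ← logGapIntegral, ← mul_assoc, ← rpow_neg_one, ← rpow_add hx]
  ring_nf

end LogGapIntegral

lemma sum_logGap_mul_le_of_esymm_le {n : ℕ} {x y : Fin n → ℝ} (hx : ∀ i, 0 ≤ x i)
    (hy : ∀ i, 0 ≤ y i) (hxy : ∑ i, x i = ∑ i, y i)
    (hE : ∀ k, 1 ≤ k → k ≤ n → esymm n k x ≤ esymm n k y) {u : ℝ} (hu : 0 ≤ u) :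
    ∑ i, logGap (u * y i) ≤ ∑ i, logGap (u * x i) := by
  have hfactor_pos {z : Fin n → ℝ} (hz : ∀ i, 0 ≤ z i) (i : Fin n) : 0 < 1 + u * z i := by
    have := mul_nonneg hu (hz i)
    positivity
  rw [sum_logGap _ fun i _ => (hfactor_pos hy i).ne',
    sum_logGap _ fun i _ => (hfactor_pos hx i).ne', ← mul_sum, ← mul_sum, hxy]
  exact sub_le_sub_left (log_le_log (prod_pos fun i _ => hfactor_pos hx i)
    (prod_one_add_mul_le_of_esymm_le hE hu)) _

theorem stmt_9 (n : ℕ) (x y : Fin n → ℝ)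
    (hx : ∀ i, 0 ≤ x i) (hy : ∀ i, 0 ≤ y i)
    (hx1 : ∑ i, x i = 1) (hy1 : ∑ i, y i = 1)
    (hE : ∀ k, 1 ≤ k → k ≤ n → esymm n k x ≤ esymm n k y)
    (α : ℝ) (hα : 1 < α) (hα2 : α < 2) :
    ∑ i, (y i) ^ α ≤ ∑ i, (x i) ^ α := by
  obtain ⟨s, rfl, hs0, hs1⟩ : ∃ s, α = 1 + s ∧ 0 < s ∧ s < 1 :=
    ⟨α - 1, by ring, by linarith, by linarith⟩
  have hint {z : Fin n → ℝ} (hz : ∀ i, 0 ≤ z i) :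
      IntegrableOn (fun u => ∑ i, logGap (u * z i) * u ^ (-2 - s)) (Ioi 0) :=
    integrable_finsetSum _ fun i _ => integrableOn_logGap_mul_mul_rpow hs0 hs1 (hz i)
  have hrepr {z : Fin n → ℝ} (hz : ∀ i, 0 ≤ z i) :
      ∫ u in Ioi 0, ∑ i, logGap (u * z i) * u ^ (-2 - s) =
        (∑ i, z i ^ (1 + s)) * logGapIntegral s := by
    rw [integral_finsetSum _ fun i _ => integrableOn_logGap_mul_mul_rpow hs0 hs1 (hz i), sum_mul]
    exact sum_congr rfl fun i _ => integral_logGap_mul_mul_rpow (hz i) (by linarith)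
  refine le_of_mul_le_mul_right ?_ (logGapIntegral_pos hs0 hs1)
  rw [← hrepr hy, ← hrepr hx]
  refine setIntegral_mono_on (hint hy) (hint hx) measurableSet_Ioi fun u hu => ?_
  simp only [← sum_mul]
  exact mul_le_mul_of_nonneg_right
    (sum_logGap_mul_le_of_esymm_le hx hy (hx1.trans hy1.symm) hE (le_of_lt hu))
    (rpow_nonneg (le_of_lt hu) _)
end

section
/- Let x, y ∈ ℝ^n be probability vectors with pairwise distinct strictly positive entries. If e_k(x) ≤ e_k(y) for all k = 1,…,n, then the subentropy satisfies Q(x) ≤ Q(y). -/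
open Finset Real

/-- Subentropy of a vector with pairwise distinct entries. -/
noncomputable def subentropy (n : ℕ) (x : Fin n → ℝ) : ℝ :=
  -∑ i, (x i ^ n / ∏ j ∈ Finset.univ.erase i, (x i - x j)) * Real.log (x i)

/-!
Partial fractions give `1 - t ^ n / ∏ i, (t + x i) = ∑ i, c i / (t + x i)`, where `c i` are the
weights in `Q` and `∑ i, c i = e₁(x) = 1`. With `∫₀^∞ ((t + a)⁻¹ - (t + 1)⁻¹) dt = -log a` this
gives `Q(x) = ∫₀^∞ (1 - t ^ n / ∏ i, (t + x i) - (t + 1)⁻¹) dt`. The integrand increases with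
`∏ i, (t + x i) = ∑ k, e_k(x) t ^ (n - k)`, which for `t ≥ 0` is termwise dominated by the same
expansion for `y`.
-/

open Polynomial Filter MeasureTheory Set Topology

section PartialFractions

variable {K ι : Type*} [Field K]

lemma natDegree_prod_X_add_C (s : Finset ι) (x : ι → K) :
    (∏ j ∈ s, (X + C (x j))).natDegree = #s := by
  simp [natDegree_prod_of_monic _ _ fun j _ => monic_X_add_C (x j)]

lemma degree_prod_X_add_C (s : Finset ι) (x : ι → K) :
    (∏ j ∈ s, (X + C (x j))).degree = (#s : WithBot ℕ) := by
  rw [degree_eq_natDegree (monic_prod_of_monic _ _ fun j _ => monic_X_add_C (x j)).ne_zero,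
    natDegree_prod_X_add_C]

variable [Fintype ι]

lemma degree_prod_X_add_C_sub_X_pow_lt (x : ι → K) :
    (∏ j, (X + C (x j)) - X ^ Fintype.card ι).degree < (Fintype.card ι : WithBot ℕ) := by
  have hmonic := monic_prod_of_monic univ _ fun j _ => monic_X_add_C (x j)
  have hdeg := degree_prod_X_add_C univ x
  rw [card_univ] at hdeg
  refine hdeg ▸ degree_sub_lt_left (by rw [hdeg, degree_X_pow]) hmonic.ne_zero ?_
  rw [hmonic.leadingCoeff, leadingCoeff_X_pow]

variable [DecidableEq ι]

noncomputable def partialFractionCoeff (x : ι → K) (i : ι) : K :=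
  x i ^ Fintype.card ι / ∏ j ∈ univ.erase i, (x i - x j)

lemma prod_erase_sub_ne_zero {x : ι → K} (hx : Function.Injective x) (i : ι) :
    ∏ j ∈ univ.erase i, (x i - x j) ≠ 0 :=
  prod_ne_zero_iff.2 fun _ hj => sub_ne_zero.2 <| hx.ne (ne_of_mem_erase hj).symm

lemma degree_sum_C_mul_prod_erase_lt (c x : ι → K) :
    (∑ i, C (c i) * ∏ j ∈ univ.erase i, (X + C (x j))).degree
      < (Fintype.card ι : WithBot ℕ) := by
  refine (degree_sum_le _ _).trans_lt <| (Finset.sup_lt_iff (WithBot.bot_lt_coe _)).2 fun i _ => ?_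
  rw [← smul_eq_C_mul]
  refine (degree_smul_le _ _).trans_lt ?_
  rw [degree_prod_X_add_C, card_erase_of_mem (mem_univ i), card_univ, Nat.cast_lt]
  exact Nat.sub_lt (Fintype.card_pos_iff.2 ⟨i⟩) Nat.one_pos

/-- The partial fraction decomposition of `1 - X ^ n / ∏ j, (X + x j)`, cleared of denominators:
both sides have degree `< n` and agree at the `n` points `-x i`. -/
lemma sum_C_partialFractionCoeff_mul_prod_erase {x : ι → K} (hx : Function.Injective x) :
    ∑ i, C (partialFractionCoeff x i) * ∏ j ∈ univ.erase i, (X + C (x j))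
      = ∏ j, (X + C (x j)) - X ^ Fintype.card ι := by
  refine eq_of_degrees_lt_of_eval_index_eq (v := fun i => -x i) univ
    (fun i _ j _ h => hx (neg_injective h)) ?_ ?_ fun i _ => ?_
  · rw [card_univ]; exact degree_sum_C_mul_prod_erase_lt _ x
  · rw [card_univ]; exact degree_prod_X_add_C_sub_X_pow_lt x
  · have hprod : ∏ j ∈ univ.erase i, (-x i + x j)
        = (-1) ^ #(univ.erase i) * ∏ j ∈ univ.erase i, (x i - x j) := by
      rw [← prod_neg]
      exact prod_congr rfl fun j _ => by ring
    simp only [eval_finsetSum, eval_mul, eval_C, eval_prod, eval_add, eval_X, eval_sub, eval_pow]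
    rw [sum_eq_single i (fun k _ hk => ?_) (by simp), prod_eq_zero (mem_univ i) (by ring), hprod,
      partialFractionCoeff, div_mul_eq_mul_div, mul_div_assoc,
      mul_div_cancel_right₀ _ (prod_erase_sub_ne_zero hx i)]
    · rw [← card_univ, ← card_erase_add_one (mem_univ i)]; ring
    · rw [prod_eq_zero (mem_erase.2 ⟨hk.symm, mem_univ i⟩) (by ring), mul_zero]

lemma sum_partialFractionCoeff {x : ι → K} (hx : Function.Injective x) :
    ∑ i, partialFractionCoeff x i = ∑ i, x i := by
  rcases isEmpty_or_nonempty ι with _ | ⟨⟨i₀⟩⟩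
  · simp
  have hpos : 0 < Fintype.card ι := Fintype.card_pos_iff.2 ⟨i₀⟩
  have hcard : Fintype.card ι - 1 < Fintype.card ι := Nat.sub_lt hpos one_pos
  have h := congrArg (fun p : K[X] => p.coeff (Fintype.card ι - 1))
    (sum_C_partialFractionCoeff_mul_prod_erase hx)
  simp only [finsetSum_coeff, coeff_C_mul, coeff_sub, coeff_X_pow, if_neg hcard.ne] at h
  have hcoeff : ∀ i, (∏ j ∈ univ.erase i, (X + C (x j))).coeff (Fintype.card ι - 1) = 1 :=
    fun i => by
      rw [← card_univ, ← card_erase_of_mem (mem_univ i), ← natDegree_prod_X_add_C _ x]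
      exact (monic_prod_of_monic _ _ fun j _ => monic_X_add_C (x j)).coeff_natDegree
  rw [prod_X_add_C_coeff _ _ (by rw [card_univ]; exact hcard.le), card_univ,
    Nat.sub_sub_self hpos, powersetCard_one, sum_map] at h
  simpa [hcoeff] using h

lemma sum_partialFractionCoeff_div {x : ι → K} (hx : Function.Injective x) {t : K}
    (ht : ∀ i, t + x i ≠ 0) :
    ∑ i, partialFractionCoeff x i / (t + x i) = 1 - t ^ Fintype.card ι / ∏ j, (t + x j) := by
  have hP : ∏ j, (t + x j) ≠ 0 := prod_ne_zero_iff.2 fun j _ => ht j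
  have h := congrArg (eval t) (sum_C_partialFractionCoeff_mul_prod_erase hx)
  simp only [eval_finsetSum, eval_mul, eval_C, eval_prod, eval_add, eval_X, eval_sub,
    eval_pow] at h
  rw [one_sub_div hP, ← h, sum_div]
  refine sum_congr rfl fun i _ => ?_
  rw [← mul_prod_erase univ (fun j => t + x j) (mem_univ i), mul_comm (t + x i), ← div_div,
    mul_div_cancel_right₀ _ (prod_ne_zero_iff.2 fun j _ => ht j)]

end PartialFractions

lemma prod_add_eq_sum_esymm {n : ℕ} (x : Fin n → ℝ) (t : ℝ) :
    ∏ i, (t + x i) = ∑ k ∈ range (n + 1), esymm n k x * t ^ (n - k) := by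
  have h := Multiset.prod_X_add_C_eq_sum_esymm (univ.val.map x)
  rw [Multiset.map_map, ← Finset.prod_eq_multiset_prod, Multiset.card_map, card_val, card_univ,
    Fintype.card_fin] at h
  simpa only [esymm, eval_prod, eval_finsetSum, eval_mul, eval_C, eval_pow, eval_X, eval_add,
    Function.comp_apply, Finset.esymm_map_val] using congrArg (eval t) h


lemma prod_add_le_prod_add_of_esymm_le {n : ℕ} {x y : Fin n → ℝ} {t : ℝ}
    (hE : ∀ k, 1 ≤ k → k ≤ n → esymm n k x ≤ esymm n k y) (ht : 0 ≤ t) :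
    ∏ i, (t + x i) ≤ ∏ i, (t + y i) := by
  rw [prod_add_eq_sum_esymm, prod_add_eq_sum_esymm]
  refine sum_le_sum fun k hk => ?_
  rcases Nat.eq_zero_or_pos k with rfl | hk₀
  · simp [esymm]
  · exact mul_le_mul_of_nonneg_right (hE k hk₀ (Nat.lt_succ_iff.1 (mem_range.1 hk)))
      (by positivity)

section Integral

lemma hasDerivAt_log_add_sub_log_add_one {a t : ℝ} (ha : 0 < a) (ht : 0 ≤ t) :
    HasDerivAt (fun t => log (t + a) - log (t + 1)) ((t + a)⁻¹ - (t + 1)⁻¹) t := by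
  have hlog : ∀ b, 0 < b → HasDerivAt (fun t => log (t + b)) (t + b)⁻¹ t := fun b hb => by
    simpa using ((hasDerivAt_id t).add_const b).log (by positivity)
  exact (hlog a ha).sub (hlog 1 one_pos)

lemma tendsto_log_add_sub_log_add_one (a : ℝ) :
    Tendsto (fun t => log (t + a) - log (t + 1)) atTop (𝓝 0) := by
  simpa using (tendsto_log_comp_add_sub_log a).sub (tendsto_log_comp_add_sub_log 1)

lemma integrableOn_inv_add_sub_inv_add_one {a : ℝ} (ha : 0 < a) :
    IntegrableOn (fun t => (t + a)⁻¹ - (t + 1)⁻¹) (Ioi 0) := by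
  have hderiv : ∀ t ∈ Ici (0 : ℝ), HasDerivAt (fun t => log (t + a) - log (t + 1))
      ((t + a)⁻¹ - (t + 1)⁻¹) t := fun t ht => hasDerivAt_log_add_sub_log_add_one ha ht
  rcases le_total a 1 with h | h
  · refine integrableOn_Ioi_deriv_of_nonneg' hderiv (fun t ht => ?_)
      (tendsto_log_add_sub_log_add_one a)
    have : (t + 1)⁻¹ ≤ (t + a)⁻¹ := inv_anti₀ (by linarith [ht.out]) (by linarith)
    linarith
  · refine integrableOn_Ioi_deriv_of_nonpos' hderiv (fun t ht => ?_)
      (tendsto_log_add_sub_log_add_one a)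
    have : (t + a)⁻¹ ≤ (t + 1)⁻¹ := inv_anti₀ (by linarith [ht.out]) (by linarith)
    linarith

lemma integral_inv_add_sub_inv_add_one {a : ℝ} (ha : 0 < a) :
    ∫ t in Ioi 0, ((t + a)⁻¹ - (t + 1)⁻¹) = -log a := by
  rw [integral_Ioi_of_hasDerivAt_of_tendsto'
    (fun t ht => hasDerivAt_log_add_sub_log_add_one ha ht)
    (integrableOn_inv_add_sub_inv_add_one ha) (tendsto_log_add_sub_log_add_one a)]
  simp

end Integral

section Subentropy

variable {ι : Type*} [Fintype ι]

noncomputable def subentropyIntegrand (x : ι → ℝ) (t : ℝ) : ℝ :=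
  1 - t ^ Fintype.card ι / ∏ i, (t + x i) - (t + 1)⁻¹

lemma subentropyIntegrand_le_of_prod_le {x y : ι → ℝ} {t : ℝ} (ht : 0 ≤ t)
    (hPx : 0 < ∏ i, (t + x i)) (hP : ∏ i, (t + x i) ≤ ∏ i, (t + y i)) :
    subentropyIntegrand x t ≤ subentropyIntegrand y t := by
  unfold subentropyIntegrand
  gcongr

variable [DecidableEq ι]

lemma subentropyIntegrand_eq_sum {x : ι → ℝ} (hx : Function.Injective x) (hx1 : ∑ i, x i = 1)
    {t : ℝ} (ht : ∀ i, t + x i ≠ 0) :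
    subentropyIntegrand x t = ∑ i, partialFractionCoeff x i * ((t + x i)⁻¹ - (t + 1)⁻¹) := by
  have hsum := sum_partialFractionCoeff hx
  rw [hx1] at hsum
  rw [subentropyIntegrand, ← sum_partialFractionCoeff_div hx ht]
  simp only [mul_sub, sum_sub_distrib, ← sum_mul, hsum, one_mul, div_eq_mul_inv]

lemma eqOn_subentropyIntegrand {x : ι → ℝ} (hpos : ∀ i, 0 < x i) (hx : Function.Injective x)
    (hx1 : ∑ i, x i = 1) :
    EqOn (subentropyIntegrand x)
      (fun t => ∑ i, partialFractionCoeff x i * ((t + x i)⁻¹ - (t + 1)⁻¹)) (Ioi 0) :=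
  fun _ ht => subentropyIntegrand_eq_sum hx hx1 fun i => (add_pos ht (hpos i)).ne'

lemma integrableOn_subentropyIntegrand {x : ι → ℝ} (hpos : ∀ i, 0 < x i)
    (hx : Function.Injective x) (hx1 : ∑ i, x i = 1) :
    IntegrableOn (subentropyIntegrand x) (Ioi 0) :=
  IntegrableOn.congr_fun (integrable_finsetSum _ fun i _ =>
    (integrableOn_inv_add_sub_inv_add_one (hpos i)).const_mul _)
      (eqOn_subentropyIntegrand hpos hx hx1).symm measurableSet_Ioi

lemma integral_subentropyIntegrand {x : ι → ℝ} (hpos : ∀ i, 0 < x i)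
    (hx : Function.Injective x) (hx1 : ∑ i, x i = 1) :
    ∫ t in Ioi 0, subentropyIntegrand x t = -∑ i, partialFractionCoeff x i * log (x i) := by
  rw [setIntegral_congr_fun measurableSet_Ioi (eqOn_subentropyIntegrand hpos hx hx1),
    integral_finsetSum _ fun i _ =>
      (integrableOn_inv_add_sub_inv_add_one (hpos i)).const_mul _]
  simp [integral_const_mul, integral_inv_add_sub_inv_add_one (hpos _)]

end Subentropy

lemma subentropy_eq_integral {n : ℕ} {x : Fin n → ℝ} (hpos : ∀ i, 0 < x i)
    (hx : Function.Injective x) (hx1 : ∑ i, x i = 1) :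
    subentropy n x = ∫ t in Ioi 0, subentropyIntegrand x t := by
  simp [integral_subentropyIntegrand hpos hx hx1, subentropy, partialFractionCoeff]

theorem stmt_18 (n : ℕ) (x y : Fin n → ℝ)
    (hx : ∀ i, 0 < x i) (hy : ∀ i, 0 < y i)
    (hxdist : ∀ i j, i ≠ j → x i ≠ x j)
    (hydist : ∀ i j, i ≠ j → y i ≠ y j)
    (hx1 : ∑ i, x i = 1) (hy1 : ∑ i, y i = 1)
    (hE : ∀ k, 1 ≤ k → k ≤ n → esymm n k x ≤ esymm n k y) :
    subentropy n x ≤ subentropy n y := by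
  have hxinj : Function.Injective x := fun i j h => by_contra fun hij => hxdist i j hij h
  have hyinj : Function.Injective y := fun i j h => by_contra fun hij => hydist i j hij h
  rw [subentropy_eq_integral hx hxinj hx1, subentropy_eq_integral hy hyinj hy1]
  refine setIntegral_mono_on (integrableOn_subentropyIntegrand hx hxinj hx1)
    (integrableOn_subentropyIntegrand hy hyinj hy1) measurableSet_Ioi fun t ht => ?_
  exact subentropyIntegrand_le_of_prod_le ht.out.le
    (prod_pos fun i _ => add_pos ht (hx i)) (prod_add_le_prod_add_of_esymm_le hE ht.out.le)
end
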